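/- sup_{μ ≥ 1} μ·( κ̂(μ) − (1/2) log 5 ) < (1/2) log(9/5). -/
import Mathlib


/-- The variational functional `f_μ(δ,ε)` (convention `0 log 0 = 0`, automatic
since `Real.log 0 = 0`). -/
noncomputable def fmu (μ : ℝ) (p : ℝ × ℝ) : ℝ :=
  -2 * p.1 * Real.log p.1 - 2 * p.2 * Real.log p.2
    - (1 - p.1 - p.2) * Real.log (1 - p.1 - p.2)
    - ((μ - 1) / 2 - p.1) * Real.log ((μ - 1) / 2 - p.1)
    - ((μ - 1) / 2 - p.2) * Real.log ((μ - 1) / 2 - p.2)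
    + (μ - 1) * Real.log ((μ - 1) / 2)

/-- The domain `D_μ` of `f_μ`. -/
def Dmu (μ : ℝ) : Set (ℝ × ℝ) :=
  {p | 0 ≤ p.1 ∧ 0 ≤ p.2 ∧ p.1 + p.2 ≤ 1 ∧ p.1 ≤ (μ - 1) / 2 ∧ p.2 ≤ (μ - 1) / 2}

/-- The interface entropy per step `κ̂(μ) = (1/μ) · sup_{(δ,ε) ∈ D_μ} f_μ(δ,ε)`. -/
noncomputable def kappaHat (μ : ℝ) : ℝ := (1 / μ) * sSup (fmu μ '' Dmu μ)

lemma neg_mul_log_le {x t : ℝ} (hx : 0 ≤ x) (ht : 0 < t) :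
    -(x * Real.log x) ≤ t - x - x * Real.log t := by
  rcases hx.eq_or_lt with h | h
  · simp [← h]
    linarith
  · have h1 : Real.log t - Real.log x ≤ t / x - 1 := by
      rw [← Real.log_div ht.ne' h.ne']
      exact Real.log_le_sub_one_of_pos (div_pos ht h)
    have h2 : x * (Real.log t - Real.log x) ≤ x * (t / x - 1) :=
      mul_le_mul_of_nonneg_left h1 h.le
    have h3 : x * (t / x - 1) = t - x := by field_simp
    rw [h3] at h2
    nlinarith [h2]

lemma quadlem {u s l : ℝ} (hu5 : u ^ 2 = 5) (hu2 : 2 < u)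
    (hl2 : u * l ^ 2 = (3 - u) / 2) :
    4 * (l * s) + (3 - u) / 2 + 2 * (s ^ 2 * u / 5) - 2 * s ^ 2 - 1 ≤ 0 := by
  have hupos : 0 < u * (u - 1) / 2 := by nlinarith
  have hident : u * (u - 1) / 2 *
      (4 * (l * s) + (3 - u) / 2 + 2 * (s ^ 2 * u / 5) - 2 * s ^ 2 - 1)
      = -((u - 1) * s - u * l) ^ 2 := by
    linear_combination ((u - 1) / 5 * s ^ 2 - u / 4) * hu5 + u * hl2
  nlinarith [hident, sq_nonneg ((u - 1) * s - u * l), hupos]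

lemma key {μ : ℝ} (hμ : 1 ≤ μ) {P : ℝ × ℝ} (hP : P ∈ Dmu μ) :
    fmu μ P ≤ μ / 2 * Real.log 5 +
      (-Real.log ((3 - Real.sqrt 5) / 2) - Real.log 5 / 2) := by
  obtain ⟨δ, ε⟩ := P
  obtain ⟨h1, h2, h3, h4, h5⟩ := hP
  simp only [fmu] at *
  obtain ⟨u, hudef⟩ : ∃ u : ℝ, u = Real.sqrt 5 := ⟨_, rfl⟩
  rw [← hudef]
  have hu0 : 0 < u := hudef ▸ Real.sqrt_pos.2 (by norm_num)
  have hu5 : u ^ 2 = 5 := hudef ▸ Real.sq_sqrt (by norm_num)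
  have hu2 : 2 < u := by nlinarith
  have hu73 : u < 7 / 3 := by nlinarith
  have hq0 : (0:ℝ) < (3 - u) / 2 := by nlinarith
  have hlogu : Real.log u = Real.log 5 / 2 := by
    rw [hudef]; exact Real.log_sqrt (by norm_num)
  rcases eq_or_lt_of_le hμ with hμ1 | hμ1
  · -- μ = 1
    have hδ : δ = 0 := le_antisymm (by rw [← hμ1] at h4; simpa using h4) h1
    have hε : ε = 0 := le_antisymm (by rw [← hμ1] at h5; simpa using h5) h2
    subst hδ; subst hε
    rw [← hμ1]
    have hq1 : (3 - u) / 2 < 1 := by nlinarith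
    have hlq : Real.log ((3 - u) / 2) < 0 := Real.log_neg hq0 hq1
    have hl5 : 0 < Real.log 5 := Real.log_pos (by norm_num)
    norm_num
    nlinarith [hlq, hl5]
  · -- μ > 1
    obtain ⟨a, hadef⟩ : ∃ a : ℝ, a = (μ - 1) / 2 := ⟨_, rfl⟩
    rw [← hadef] at h4 h5 ⊢
    have ha0 : 0 < a := by rw [hadef]; linarith
    have hμ2 : μ = 2 * a + 1 := by rw [hadef]; ring
    obtain ⟨s, hsdef⟩ : ∃ s : ℝ, s = Real.sqrt a := ⟨_, rfl⟩
    have hs0 : 0 < s := hsdef ▸ Real.sqrt_pos.2 ha0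
    have hs2 : s ^ 2 = a := hsdef ▸ Real.sq_sqrt ha0.le
    obtain ⟨l, hldef⟩ : ∃ l : ℝ, l = Real.sqrt ((3 - u) / 2 / u) := ⟨_, rfl⟩
    have hl0 : 0 < l := hldef ▸ Real.sqrt_pos.2 (by positivity)
    have hl2 : l ^ 2 = (3 - u) / 2 / u := hldef ▸ Real.sq_sqrt (by positivity)
    have hl2' : u * l ^ 2 = (3 - u) / 2 := by rw [hl2]; field_simp
    have hlogs : Real.log s = Real.log a / 2 := by
      rw [hsdef]; exact Real.log_sqrt ha0.le
    have hlogl : Real.log l = (Real.log ((3 - u) / 2) - Real.log 5 / 2) / 2 := by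
      rw [hldef, Real.log_sqrt (by positivity), Real.log_div hq0.ne' hu0.ne', hlogu]
    have hlogp : Real.log (l * s)
        = (Real.log ((3 - u) / 2) - Real.log 5 / 2) / 2 + Real.log a / 2 := by
      rw [Real.log_mul hl0.ne' hs0.ne', hlogl, hlogs]
    have hlogr : Real.log (a * u / 5) = Real.log a - Real.log 5 / 2 := by
      rw [Real.log_div (by positivity) (by norm_num),
        Real.log_mul ha0.ne' hu0.ne', hlogu]
      ring
    have A1 : -(δ * Real.log δ) ≤ l * s - δ
        - δ * ((Real.log ((3 - u) / 2) - Real.log 5 / 2) / 2 + Real.log a / 2) := by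
      have := neg_mul_log_le h1 (mul_pos hl0 hs0)
      rwa [hlogp] at this
    have A2 : -(ε * Real.log ε) ≤ l * s - ε
        - ε * ((Real.log ((3 - u) / 2) - Real.log 5 / 2) / 2 + Real.log a / 2) := by
      have := neg_mul_log_le h2 (mul_pos hl0 hs0)
      rwa [hlogp] at this
    have A3 : -((1 - δ - ε) * Real.log (1 - δ - ε)) ≤ (3 - u) / 2 - (1 - δ - ε)
        - (1 - δ - ε) * Real.log ((3 - u) / 2) :=
      neg_mul_log_le (by linarith) hq0
    have A4 : -((a - δ) * Real.log (a - δ)) ≤ a * u / 5 - (a - δ)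
        - (a - δ) * (Real.log a - Real.log 5 / 2) := by
      have := neg_mul_log_le (sub_nonneg.2 h4) (by positivity : (0:ℝ) < a * u / 5)
      rwa [hlogr] at this
    have A5 : -((a - ε) * Real.log (a - ε)) ≤ a * u / 5 - (a - ε)
        - (a - ε) * (Real.log a - Real.log 5 / 2) := by
      have := neg_mul_log_le (sub_nonneg.2 h5) (by positivity : (0:ℝ) < a * u / 5)
      rwa [hlogr] at this
    have quad0 := quadlem (s := s) hu5 hu2 hl2'
    rw [hs2] at quad0
    rw [hμ2]
    linarith [A1, A2, A3, A4, A5, quad0]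

/-- `sup_{μ ≥ 1} μ·(κ̂(μ) − (1/2) log 5) < (1/2) log(9/5)`. -/
theorem stmt10 :
    sSup ((fun μ : ℝ => μ * (kappaHat μ - (1 / 2) * Real.log 5)) '' Set.Ici 1)
      < (1 / 2) * Real.log (9 / 5) := by
  have hu0 : (0:ℝ) < Real.sqrt 5 := Real.sqrt_pos.2 (by norm_num)
  have hu5 : Real.sqrt 5 ^ 2 = 5 := Real.sq_sqrt (by norm_num)
  have hu2 : 2 < Real.sqrt 5 := by nlinarith
  have hu73 : Real.sqrt 5 < 7 / 3 := by nlinarith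
  have hq0 : (0:ℝ) < (3 - Real.sqrt 5) / 2 := by nlinarith
  have hlog5 : 0 < Real.log 5 := Real.log_pos (by norm_num)
  have hM0 : 0 ≤ -Real.log ((3 - Real.sqrt 5) / 2) - Real.log 5 / 2 := by
    have h1 : Real.log ((3 - Real.sqrt 5) / 2 * Real.sqrt 5) < 0 :=
      Real.log_neg (by positivity) (by nlinarith)
    rw [Real.log_mul hq0.ne' hu0.ne', Real.log_sqrt (by norm_num)] at h1
    linarith
  have hMlt : -Real.log ((3 - Real.sqrt 5) / 2) - Real.log 5 / 2
      < 1 / 2 * Real.log (9 / 5) := by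
    have h9 : Real.log ((9:ℝ) / 5) = Real.log 9 - Real.log 5 :=
      Real.log_div (by norm_num) (by norm_num)
    have h9' : Real.log (9:ℝ) = 2 * Real.log 3 := by
      rw [show (9:ℝ) = 3 ^ 2 by norm_num, Real.log_pow]
      push_cast; ring
    have h3 : 0 < Real.log (3 * ((3 - Real.sqrt 5) / 2)) :=
      Real.log_pos (by nlinarith)
    rw [Real.log_mul (by norm_num) hq0.ne'] at h3
    rw [h9, h9']
    linarith
  refine lt_of_le_of_lt (Real.sSup_le ?_ hM0) hMlt
  rintro y ⟨μ, hμ, rfl⟩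
  have hμ1 : (1:ℝ) ≤ μ := hμ
  have hμ0 : (0:ℝ) < μ := by linarith
  have hmul : 0 ≤ μ / 2 * Real.log 5 := by positivity
  have hS : sSup (fmu μ '' Dmu μ) ≤ μ / 2 * Real.log 5 +
      (-Real.log ((3 - Real.sqrt 5) / 2) - Real.log 5 / 2) := by
    apply Real.sSup_le
    · rintro x ⟨P, hP, rfl⟩
      exact key hμ1 hP
    · linarith
  have hrw : μ * (kappaHat μ - (1 / 2) * Real.log 5)
      = sSup (fmu μ '' Dmu μ) - μ / 2 * Real.log 5 := by
    simp only [kappaHat]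
    field_simp
  show μ * (kappaHat μ - (1 / 2) * Real.log 5)
      ≤ -Real.log ((3 - Real.sqrt 5) / 2) - Real.log 5 / 2
  rw [hrw]
  linarith
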